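/- Projected subgradient method convergence: let f : ℝⁿ → ℝ be convex with subgradients uniformly bounded by G on a nonempty closed convex set C, let x* be a minimizer of f over C, and consider the iteration x_{k+1} = P_C(x_k − α_k g_k) where g_k is a subgradient of f at x_k and P_C is the Euclidean projection onto C. If the step sizes satisfy ∑ α_k = ∞ and ∑ α_k² < ∞, then min_{i ≤ k} f(x_i) → min_{x ∈ C} f(x) as k → ∞. -/

import Mathlib

open Finset Filter

/-- projected subgradient method.  For `f` convex with subgradients bounded
by `G`, `C` nonempty closed convex with Euclidean projection `P`, a minimizer `x*` of `f`
over `C`, and step sizes with `∑ αₖ = ∞`, `∑ αₖ² < ∞`, the running minimum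
`min_{i ≤ k} f(xᵢ)` of the iterates `x_{k+1} = P(x_k − α_k g_k)` converges to
`min_{x ∈ C} f(x) = f(x*)`. -/
theorem projected_subgradient_convergence (n : ℕ)
    (f : EuclideanSpace ℝ (Fin n) → ℝ) (hf : ConvexOn ℝ Set.univ f)
    (C : Set (EuclideanSpace ℝ (Fin n)))
    (hCne : C.Nonempty) (hCcl : IsClosed C) (hCcv : Convex ℝ C)
    (P : EuclideanSpace ℝ (Fin n) → EuclideanSpace ℝ (Fin n))
    (hP : ∀ x, P x ∈ C ∧ ∀ y ∈ C, ‖P x - x‖ ≤ ‖y - x‖)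
    (xstar : EuclideanSpace ℝ (Fin n))
    (hxstarC : xstar ∈ C) (hxstarMin : ∀ y ∈ C, f xstar ≤ f y)
    (G : ℝ) (x g : ℕ → EuclideanSpace ℝ (Fin n)) (α : ℕ → ℝ)
    (hx0 : x 0 ∈ C)
    (hg : ∀ k, ∀ y, f y ≥ f (x k) + (inner ℝ (g k) (y - x k) : ℝ))
    (hgb : ∀ k, ‖g k‖ ≤ G)
    (hαpos : ∀ k, 0 < α k)
    (hαdiv : Tendsto (fun N => ∑ k ∈ Finset.range N, α k) atTop atTop)
    (hαsq : Summable fun k => (α k) ^ 2)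
    (hiter : ∀ k, x (k + 1) = P (x k - α k • g k)) :
    Tendsto (fun k => ⨅ i : Fin (k + 1), f (x i)) atTop (nhds (f xstar)) := by
  -- iterates stay in C
  have hxC : ∀ k, x k ∈ C := by
    intro k
    cases k with
    | zero => exact hx0
    | succ k => rw [hiter k]; exact (hP _).1
  -- nonexpansiveness of the projection relative to points of C
  have hproj : ∀ z, ∀ y ∈ C, ‖P z - y‖ ≤ ‖z - y‖ := by
    intro z y hy
    have hPz := hP z
    have hmin : ‖z - P z‖ = ⨅ w : C, ‖z - w‖ := by
      haveI : Nonempty C := ⟨⟨y, hy⟩⟩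
      refine le_antisymm ?_ ?_
      · refine le_ciInf fun w => ?_
        rw [norm_sub_rev z (P z), norm_sub_rev z w]
        exact hPz.2 w w.2
      · exact ciInf_le ⟨0, fun _ ⟨_, h⟩ => h ▸ norm_nonneg _⟩ (⟨P z, hPz.1⟩ : C)
    have hobtuse := (norm_eq_iInf_iff_real_inner_le_zero hCcv hPz.1).1 hmin y hy
    have hsq : ‖P z - y‖ ^ 2 ≤ ‖z - y‖ ^ 2 := by
      have hdecomp : z - y = (z - P z) + (P z - y) := by abel
      have := @norm_add_sq_real (EuclideanSpace ℝ (Fin n)) _ _ (z - P z) (P z - y)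
      rw [hdecomp, this]
      have hin : (0:ℝ) ≤ inner ℝ (z - P z) (P z - y) := by
        have : (P z - y) = -(y - P z) := by abel
        rw [this, inner_neg_right]
        linarith
      nlinarith [norm_nonneg (z - P z), sq_nonneg ‖z - P z‖]
    exact (pow_le_pow_iff_left₀ (norm_nonneg _) (norm_nonneg _) two_ne_zero).1 hsq
  -- key per-step inequality
  have key : ∀ k, ‖x (k+1) - xstar‖ ^ 2 ≤
      ‖x k - xstar‖ ^ 2 - 2 * α k * (f (x k) - f xstar) + (α k) ^ 2 * G ^ 2 := by
    intro k
    have h1 : ‖x (k+1) - xstar‖ ≤ ‖(x k - α k • g k) - xstar‖ := by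
      rw [hiter k]; exact hproj _ _ hxstarC
    have h1' : ‖x (k+1) - xstar‖ ^ 2 ≤ ‖(x k - α k • g k) - xstar‖ ^ 2 :=
      pow_le_pow_left₀ (norm_nonneg _) h1 2
    have hdecomp : (x k - α k • g k) - xstar = (x k - xstar) - α k • g k := by abel
    have hexp : ‖(x k - xstar) - α k • g k‖ ^ 2 =
        ‖x k - xstar‖ ^ 2 - 2 * (α k * inner ℝ (g k) (x k - xstar)) + (α k)^2 * ‖g k‖ ^ 2 := by
      rw [@norm_sub_sq_real (EuclideanSpace ℝ (Fin n)) _ _]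
      rw [real_inner_smul_right, norm_smul, real_inner_comm]
      rw [mul_pow]
      simp only [Real.norm_eq_abs, sq_abs]
    have hsub : f (x k) - f xstar ≤ inner ℝ (g k) (x k - xstar) := by
      have := hg k xstar
      have hxx : inner ℝ (g k) (xstar - x k) = - (inner ℝ (g k) (x k - xstar) : ℝ) := by
        rw [← inner_neg_right]
        congr 1
        abel
      rw [hxx] at this
      linarith
    have hgk : ‖g k‖ ^ 2 ≤ G ^ 2 :=
      pow_le_pow_left₀ (norm_nonneg _) (hgb k) 2
    have hα2 : (0:ℝ) ≤ (α k)^2 := sq_nonneg _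
    calc ‖x (k+1) - xstar‖ ^ 2 ≤ ‖(x k - xstar) - α k • g k‖ ^ 2 := by rw [← hdecomp]; exact h1'
      _ = ‖x k - xstar‖ ^ 2 - 2 * (α k * inner ℝ (g k) (x k - xstar)) + (α k)^2 * ‖g k‖ ^ 2 := hexp
      _ ≤ ‖x k - xstar‖ ^ 2 - 2 * α k * (f (x k) - f xstar) + (α k) ^ 2 * G ^ 2 := by
          have h2 : α k * (f (x k) - f xstar) ≤ α k * inner ℝ (g k) (x k - xstar) :=
            mul_le_mul_of_nonneg_left hsub (hαpos k).le
          have h3 : (α k)^2 * ‖g k‖^2 ≤ (α k)^2 * G^2 := mul_le_mul_of_nonneg_left hgk hα2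
          linarith
  -- summed inequality
  have sumineq : ∀ N, ∑ i ∈ Finset.range N, 2 * α i * (f (x i) - f xstar) ≤
      ‖x 0 - xstar‖ ^ 2 - ‖x N - xstar‖ ^ 2 + G ^ 2 * ∑ i ∈ Finset.range N, (α i) ^ 2 := by
    intro N
    induction N with
    | zero => simp
    | succ N ih =>
      rw [Finset.sum_range_succ, Finset.sum_range_succ]
      have := key N
      linarith
  set S := ∑' i, (α i) ^ 2 with hS
  have hpartial : ∀ N, ∑ i ∈ Finset.range N, (α i) ^ 2 ≤ S :=
    fun N => Summable.sum_le_tsum _ (fun i _ => sq_nonneg _) hαsq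
  set B := ‖x 0 - xstar‖ ^ 2 + G ^ 2 * S with hB
  have hsum2 : ∀ N, ∑ i ∈ Finset.range N, 2 * α i * (f (x i) - f xstar) ≤ B := by
    intro N
    have h1 := sumineq N
    have h2 := hpartial N
    have h3 : G ^ 2 * ∑ i ∈ Finset.range N, (α i) ^ 2 ≤ G ^ 2 * S :=
      mul_le_mul_of_nonneg_left h2 (sq_nonneg G)
    nlinarith [sq_nonneg ‖x N - xstar‖]
  -- the running minimum
  set F : ℕ → ℝ := fun k => ⨅ i : Fin (k + 1), f (x i) with hF
  have hFlb : ∀ k, f xstar ≤ F k := by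
    intro k
    exact le_ciInf fun i => hxstarMin _ (hxC i)
  have hFub : ∀ k, ∀ i : Fin (k+1), F k ≤ f (x i) := by
    intro k i
    exact ciInf_le (Set.Finite.bddBelow (Set.finite_range _)) i
  set A : ℕ → ℝ := fun N => ∑ i ∈ Finset.range N, α i with hA
  have hApos : ∀ k, 0 < A (k + 1) := by
    intro k
    exact Finset.sum_pos (fun i _ => hαpos i) (Finset.nonempty_range_add_one)
  have hmain : ∀ k, F k - f xstar ≤ B / (2 * A (k + 1)) := by
    intro k
    rw [le_div_iff₀ (by have := hApos k; linarith)]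
    have hlow : (F k - f xstar) * (2 * A (k+1)) =
        ∑ i ∈ Finset.range (k+1), 2 * α i * (F k - f xstar) := by
      rw [hA]
      rw [Finset.mul_sum, Finset.mul_sum]
      refine Finset.sum_congr rfl fun i _ => by ring
    rw [hlow]
    refine le_trans (Finset.sum_le_sum ?_) (hsum2 (k+1))
    intro i hi
    have hik : F k ≤ f (x i) := hFub k ⟨i, Finset.mem_range.1 hi⟩
    have : (0:ℝ) ≤ 2 * α i := by linarith [hαpos i]
    nlinarith
  -- limit argument
  have hAtend : Tendsto (fun k => A (k + 1)) atTop atTop :=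
    hαdiv.comp (tendsto_add_atTop_nat 1)
  have htend : Tendsto (fun k => B / (2 * A (k + 1))) atTop (nhds 0) :=
    Tendsto.div_atTop tendsto_const_nhds (hAtend.const_mul_atTop two_pos)
  have hsq0 : Tendsto (fun k => F k - f xstar) atTop (nhds 0) := by
    refine squeeze_zero (fun k => by linarith [hFlb k]) (fun k => hmain k) htend
  have := hsq0.add_const (f xstar)
  simpa using this
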